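/- arXiv:2508.18191 — 2 statements merged into one kernel-verified Lean document; each statement's English description precedes it below -/
import Mathlib

section
/- Let K be a field, m ≥ 1, n ≥ 3, and let a, a_1, a_2, a_3 ∈ K be nonzero with n - km ≠ 0 in K (k a positive integer). Then the polynomials a_1(n - km) X_1^m + a, a_1 X_1^m - a_2 X_2^m, a_1 X_1^m - a_3 X_3^m form a regular sequence in K[X_1, ..., X_n]. -/
/-!
Write `δ = n - km`. Modulo `f₁ = a₁δ X₁ᵐ + a`, the term `a₁X₁ᵐ` is congruent to `-a/δ`, so `f₂`
and `f₃` may be replaced by `-a₂X₂ᵐ - a/δ` and `-a₃X₃ᵐ - a/δ`: changing later terms modulo the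
first one does not affect regularity. The three new polynomials live in distinct variables and
have unit leading coefficients, so regularity follows by adjoining one variable at a time: if `rs`
is regular on `R` and `p ∈ R[X]` has unit leading coefficient and positive degree, then `p, rs` is
regular on `R[X]`. Indeed `p` is a non-zero-divisor, `R[X]/(p)` is free over `R` (hence flat, so
`rs` stays weakly regular on it), and `p` remains a non-unit over `R/(rs)`.
-/

section

open Polynomial RingTheory.Sequence Pointwise

theorem RingTheory.Sequence.isRegular_cons_congr {R M : Type*} [CommRing R] [AddCommGroup M]
    [Module R M] {r r' : R} {rs rs' : List R} (hr : Ideal.span {r} = Ideal.span {r'})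
    (hrs : List.Forall₂ (fun s s' => s - s' ∈ Ideal.span {r}) rs rs') :
    IsRegular M (r :: rs) ↔ IsRegular M (r' :: rs') := by
  have regular_of_mem_span {a b : R} (hab : a ∈ Ideal.span {b}) (ha : IsSMulRegular M a) :
      IsSMulRegular M b := by
    obtain ⟨c, rfl⟩ := Ideal.mem_span_singleton'.mp hab
    exact ha.of_mul
  have hsmul : r • (⊤ : Submodule R M) = r' • ⊤ := by
    rw [← Submodule.ideal_span_singleton_smul, hr, Submodule.ideal_span_singleton_smul]
  rw [isRegular_cons_iff, isRegular_cons_iff]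
  refine and_congr ⟨regular_of_mem_span (hr ▸ Ideal.mem_span_singleton_self r),
    regular_of_mem_span (hr ▸ Ideal.mem_span_singleton_self r')⟩ ?_
  refine ((Submodule.quotEquivOfEq _ _ hsmul).isRegular_congr rs).trans
    ((AddEquiv.refl _).isRegular_congr (hrs.imp fun {s s'} hss' x => ?_))
  have hann : s - s' ∈ Module.annihilator R (QuotSMulTop r' M) :=
    (Ideal.span_singleton_le_iff_mem _).mpr (QuotSMulTop.mem_annihilator M r') (hr ▸ hss')
  rw [AddEquiv.refl_apply, AddEquiv.refl_apply, ← sub_eq_zero, ← sub_smul,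
    Module.mem_annihilator.mp hann x]

namespace Polynomial

theorem natDegree_C_mul_X_pow_add_C {R : Type*} [Semiring R] {c : R} (hc : c ≠ 0) (m : ℕ)
    (d : R) : (C c * X ^ m + C d).natDegree = m := by
  rw [natDegree_add_C, natDegree_C_mul_X_pow m c hc]

theorem leadingCoeff_C_mul_X_pow_add_C {R : Type*} [Semiring R] {c : R} (hc : c ≠ 0) {m : ℕ}
    (hm : 0 < m) (d : R) : (C c * X ^ m + C d).leadingCoeff = c := by
  rw [leadingCoeff_add_of_degree_lt', leadingCoeff_C_mul_X_pow]
  rw [degree_C_mul_X_pow m hc]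
  exact degree_C_le.trans_lt (by exact_mod_cast hm)

variable {R : Type*} [CommRing R]

theorem Monic.flat_quotSMulTop {p : R[X]} (hp : p.Monic) :
    Module.Flat R (QuotSMulTop p R[X]) := by
  have : Module.Free R (R[X] ⧸ Ideal.span {p}) :=
    Module.Free.of_basis (AdjoinRoot.powerBasis' hp).basis
  let e : QuotSMulTop p R[X] ≃ₗ[R[X]] R[X] ⧸ Ideal.span {p} := Submodule.quotEquivOfEq _ _
    (by rw [← Submodule.ideal_span_singleton_smul, smul_eq_mul, Ideal.mul_top])
  exact Module.Flat.of_linearEquiv (e.restrictScalars R)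

theorem Monic.span_sup_map_C_ne_top {p : R[X]} (hp : p.Monic) (hdeg : 0 < p.natDegree)
    {I : Ideal R} (hI : I ≠ ⊤) : Ideal.span {p} ⊔ I.map C ≠ ⊤ := by
  have : Nontrivial (R ⧸ I) := Ideal.Quotient.nontrivial_iff.mpr hI
  let φ := mapRingHom (Ideal.Quotient.mk I)
  have hker : I.map C ≤ RingHom.ker φ := by rw [ker_mapRingHom, Ideal.mk_ker]
  intro htop
  have hunit : IsUnit (φ p) := by
    rw [← Ideal.span_singleton_eq_top, ← Ideal.map_top φ, ← htop, Ideal.map_sup, Ideal.map_span,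
      Set.image_singleton, (Ideal.map_eq_bot_iff_le_ker φ).mpr hker, sup_bot_eq]
  rw [coe_mapRingHom, (hp.map _).isUnit_iff] at hunit
  have h := hp.natDegree_map (Ideal.Quotient.mk I)
  rw [hunit, natDegree_one] at h
  omega

theorem Monic.isRegular_cons_map_C {p : R[X]} (hp : p.Monic) (hdeg : 0 < p.natDegree)
    {rs : List R} (h : IsRegular R rs) : IsRegular R[X] (p :: rs.map C) := by
  have := hp.flat_quotSMulTop
  refine ⟨(isWeaklyRegular_cons_iff _ _ _).mpr ⟨hp.isRegular.left.isSMulRegular, ?_⟩, ?_⟩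
  · rw [← algebraMap_eq (R := R), isWeaklyRegular_map_algebraMap_iff]
    exact ((TensorProduct.rid R _).isWeaklyRegular_congr rs).mp
      h.toIsWeaklyRegular.isWeaklyRegular_lTensor
  · have hrs := h.top_ne_smul
    rw [smul_eq_mul, Ideal.mul_top] at hrs ⊢
    rw [Ideal.ofList_cons, ← Ideal.map_ofList]
    exact (hp.span_sup_map_C_ne_top hdeg hrs.symm).symm

theorem isRegular_cons_map_C_of_isUnit_leadingCoeff {p : R[X]} (hp : IsUnit p.leadingCoeff)
    (hdeg : 0 < p.natDegree) {rs : List R} (h : IsRegular R rs) :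
    IsRegular R[X] (p :: rs.map C) := by
  have hu : IsUnit (↑hp.unit⁻¹ : R) := Units.isUnit _
  have hq : (C (↑hp.unit⁻¹ : R) * p).Monic := by
    simpa only [Units.smul_def, smul_eq_C_mul] using monic_of_isUnit_leadingCoeff_inv_smul hp
  have hdeg' : 0 < (C (↑hp.unit⁻¹ : R) * p).natDegree := by
    rwa [natDegree_C_mul_of_isUnit hu]
  refine (isRegular_cons_congr ?_ (List.forall₂_same.mpr fun s _ => by simp)).mp
    (hq.isRegular_cons_map_C hdeg' h)
  exact Ideal.span_singleton_mul_left_unit (isUnit_C.mpr hu) p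

end Polynomial

namespace MvPolynomial

variable {R : Type*} [CommRing R]

theorem finSuccEquiv_rename_succ {n : ℕ} (f : MvPolynomial (Fin n) R) :
    finSuccEquiv R n (rename Fin.succ f) = Polynomial.C f := by
  induction f using MvPolynomial.induction_on with
  | C a => simp [finSuccEquiv_apply]
  | add p q hp hq => simp [hp, hq]
  | mul_X p i hp => simp [hp, finSuccEquiv_X_succ]

theorem isRegular_cons_map_rename_succ {n : ℕ} {p : MvPolynomial (Fin (n + 1)) R}
    (hp : IsUnit (finSuccEquiv R n p).leadingCoeff) (hdeg : 0 < (finSuccEquiv R n p).natDegree)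
    {rs : List (MvPolynomial (Fin n) R)} (h : IsRegular (MvPolynomial (Fin n) R) rs) :
    IsRegular (MvPolynomial (Fin (n + 1)) R) (p :: rs.map (rename Fin.succ)) := by
  let e := (finSuccEquiv R n).toRingEquiv
  have := RingHomInvPair.of_ringEquiv e
  have := RingHomInvPair.of_ringEquiv_symm e
  rw [e.toSemilinearEquiv.isRegular_congr', List.map_cons, List.map_map]
  convert isRegular_cons_map_C_of_isUnit_leadingCoeff hp hdeg h using 2
  · rfl
  · exact List.map_congr_left fun f _ => finSuccEquiv_rename_succ f

theorem isRegular_cons_C_mul_X_zero_pow_add_C {n m : ℕ} (hm : 0 < m) {c : R} (hc : IsUnit c)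
    (d : R) {rs : List (MvPolynomial (Fin n) R)} (h : IsRegular (MvPolynomial (Fin n) R) rs) :
    IsRegular (MvPolynomial (Fin (n + 1)) R)
      ((C c * X 0 ^ m + C d) :: rs.map (rename Fin.succ)) := by
  have := h.nontrivial
  have hC : IsUnit (C c : MvPolynomial (Fin n) R) := hc.map C
  have hq : finSuccEquiv R n (C c * X 0 ^ m + C d) =
      Polynomial.C (C c) * Polynomial.X ^ m + Polynomial.C (C d) := by
    simp [finSuccEquiv_apply]
  refine isRegular_cons_map_rename_succ ?_ ?_ h <;> rw [hq]
  · rw [leadingCoeff_C_mul_X_pow_add_C hC.ne_zero hm]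
    exact hC
  · rwa [natDegree_C_mul_X_pow_add_C hC.ne_zero]

end MvPolynomial

end

open MvPolynomial in
/-- The polynomials `a_1(n-km) X_1^m + a`, `a_1 X_1^m - a_2 X_2^m`, `a_1 X_1^m - a_3 X_3^m`
form a regular sequence in `K[X_1,…,X_n]` when `a, a_1, a_2, a_3 ≠ 0` and `n - km ≠ 0` in `K`. -/
theorem stmt7 (K : Type*) [Field K] (n m k : ℕ) (hn : 3 ≤ n) (hm : 1 ≤ m)
    (a a1 a2 a3 : K) (h1 : a1 ≠ 0) (h2 : a2 ≠ 0) (h3 : a3 ≠ 0)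
    (hnkm : (n : K) - (k * m : ℕ) ≠ 0) :
    RingTheory.Sequence.IsRegular (MvPolynomial (Fin n) K)
      [C (a1 * ((n : K) - (k * m : ℕ))) * X (⟨0, by omega⟩ : Fin n) ^ m + C a,
       C a1 * X (⟨0, by omega⟩ : Fin n) ^ m - C a2 * X (⟨1, by omega⟩ : Fin n) ^ m,
       C a1 * X (⟨0, by omega⟩ : Fin n) ^ m - C a3 * X (⟨2, by omega⟩ : Fin n) ^ m] := by
  obtain ⟨N, rfl⟩ : ∃ N, n = N + 3 := ⟨n - 3, by omega⟩
  set δ : K := ((N + 3 : ℕ) : K) - ((k * m : ℕ) : K)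
  have hreg : RingTheory.Sequence.IsRegular (MvPolynomial (Fin (N + 3)) K)
      [C (a1 * δ) * X (⟨0, by omega⟩ : Fin (N + 3)) ^ m + C a,
        C (-a2) * X (⟨1, by omega⟩ : Fin (N + 3)) ^ m + C (-(a / δ)),
        C (-a3) * X (⟨2, by omega⟩ : Fin (N + 3)) ^ m + C (-(a / δ))] := by
    have hz := isRegular_cons_C_mul_X_zero_pow_add_C hm (neg_ne_zero.mpr h3).isUnit (-(a / δ))
      (RingTheory.Sequence.IsRegular.nil (MvPolynomial (Fin N) K) (MvPolynomial (Fin N) K))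
    have hyz := isRegular_cons_C_mul_X_zero_pow_add_C hm (neg_ne_zero.mpr h2).isUnit (-(a / δ)) hz
    have h := isRegular_cons_C_mul_X_zero_pow_add_C hm (mul_ne_zero h1 hnkm).isUnit a hyz
    simp only [List.map_cons, List.map_nil, map_add, map_mul (rename Fin.succ), map_pow, rename_C,
      rename_X] at h
    exact h
  refine (RingTheory.Sequence.isRegular_cons_congr rfl ?_).mp hreg
  have hδ : C δ⁻¹ * C δ = (1 : MvPolynomial (Fin (N + 3)) K) := by
    rw [← map_mul, inv_mul_cancel₀ hnkm, map_one]
  simp only [List.forall₂_cons, List.Forall₂.nil, and_true]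
  constructor <;> refine Ideal.mem_span_singleton'.mpr ⟨-C δ⁻¹, ?_⟩ <;>
    simp only [map_mul, map_neg, div_eq_mul_inv] <;>
    linear_combination -(C a1 * X (⟨0, by omega⟩ : Fin (N + 3)) ^ m) * hδ
end

section
/- Let x be a common zero of f and all its partial derivatives, where f = (a_1 X_1^m + ... + a_n X_n^m + a)^k - b X_1⋯X_n over a field of characteristic not dividing mk, with a, b, a_i nonzero, and suppose all coordinates x_j are nonzero. Then, setting g = a_1 X_1^m + ... + a_n X_n^m + a, one has g(x) = km a_j x_j^m for every j, a_1 x_1^m = a_j x_j^m for every j, and a_1 (n - km) x_1^m + a = 0. -/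
/-!
Write `f = g ^ k - b X₁⋯Xₙ`. Since `X_j ∂_j` fixes the monomial `X₁⋯Xₙ` and multiplies
`X_j ^ m` by `m`, the Euler-type identity `f - X_j ∂_j f = g ^ (k - 1) (g - k m c_j X_j ^ m)`
holds. At `x` the left side vanishes, and `g(x) ≠ 0` because `g(x) ^ k = b x₁⋯xₙ ≠ 0`; hence
`g(x) = k m c_j x_j ^ m` for every `j`. As `k m` is invertible, all the terms `c_j x_j ^ m` agree,
and summing them in `g(x)` gives the last identity.
-/

namespace MvPolynomial

open Finset

variable {R σ : Type*}

section CommSemiring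
variable [CommSemiring R]

theorem X_mul_pderiv_X_pow (i : σ) (m : ℕ) :
    X i * pderiv i (X i ^ m : MvPolynomial σ R) = (m : MvPolynomial σ R) * X i ^ m := by
  rw [X_pow_eq_monomial, X_mul_pderiv_monomial, nsmul_eq_mul]
  simp

theorem X_mul_pderiv_pow (j : σ) (g : MvPolynomial σ R) (k : ℕ) :
    X j * pderiv j (g ^ k) = (k : MvPolynomial σ R) * g ^ (k - 1) * (X j * pderiv j g) := by
  rw [pderiv_pow]; ring

variable [Fintype σ]

theorem X_mul_pderiv_prod_X (j : σ) :
    X j * pderiv j (∏ i, X i : MvPolynomial σ R) = ∏ i, X i := by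
  classical
  have h : (∏ i, X i : MvPolynomial σ R) = monomial (∑ i, Finsupp.single i 1) 1 := by
    rw [monomial_sum_one]; rfl
  rw [h, X_mul_pderiv_monomial]
  simp [Finsupp.finsetSum_apply, Finsupp.single_apply]

theorem X_mul_pderiv_sum_C_mul_X_pow_add_C (c : σ → R) (a : R) (m : ℕ) (j : σ) :
    X j * pderiv j (∑ i, C (c i) * X i ^ m + C a) =
      (m : MvPolynomial σ R) * C (c j) * X j ^ m := by
  classical
  rw [map_add, pderiv_C, add_zero, map_sum, mul_sum, sum_eq_single j]
  · rw [pderiv_C_mul, mul_left_comm, X_mul_pderiv_X_pow]; ring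
  · intro i _ hij
    rw [pderiv_C_mul, pderiv_pow, pderiv_X_of_ne hij]; simp
  · simp

end CommSemiring

section CommRing
variable [CommRing R] [Fintype σ]

theorem sub_X_mul_pderiv_pow_sub_C_mul_prod_X (g : MvPolynomial σ R) (b : R) {k : ℕ}
    (hk : k ≠ 0) (j : σ) :
    g ^ k - C b * ∏ i, X i - X j * pderiv j (g ^ k - C b * ∏ i, X i) =
      g ^ (k - 1) * (g - (k : MvPolynomial σ R) * (X j * pderiv j g)) := by
  have hgk : g ^ k = g ^ (k - 1) * g := by
    rw [← pow_succ, Nat.sub_add_cancel (Nat.one_le_iff_ne_zero.2 hk)]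
  rw [map_sub, mul_sub, pderiv_C_mul, mul_left_comm, X_mul_pderiv_prod_X, X_mul_pderiv_pow, hgk]
  ring

theorem eval_ne_zero_of_eval_pow_sub_C_mul_prod_X_eq_zero [IsDomain R]
    {g : MvPolynomial σ R} {b : R} {k : ℕ} {x : σ → R} (hk : k ≠ 0) (hb : b ≠ 0)
    (hx : ∀ i, x i ≠ 0) (hf : eval x (g ^ k - C b * ∏ i, X i) = 0) : eval x g ≠ 0 := by
  intro hg
  simp only [map_sub, map_pow, hg, zero_pow hk, map_mul, eval_C, map_prod, eval_X, zero_sub,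
    neg_eq_zero, mul_eq_zero, hb, false_or] at hf
  exact prod_ne_zero_iff.2 (fun i _ => hx i) hf

end CommRing

end MvPolynomial

open MvPolynomial in
/-- If `x` is a common zero of `f = (∑ a_i X_i^m + a)^k - b X_1⋯X_n` and all its partial
derivatives, with all coordinates nonzero, then `g(x) = km a_j x_j^m` for all `j`,
`a_1 x_1^m = a_j x_j^m` for all `j`, and `a_1 (n - km) x_1^m + a = 0`. -/
theorem stmt13 (K : Type*) [Field K] (p n m k : ℕ) [CharP K p]
    (hn : 3 ≤ n) (hp : ¬ p ∣ m * k)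
    (a b : K) (hb : b ≠ 0) (c : Fin n → K)
    (x : Fin n → K) (hx : ∀ j, x j ≠ 0)
    (hf : MvPolynomial.eval x
      ((∑ i, C (c i) * X i ^ m + C a) ^ k - C b * ∏ i, X i) = 0)
    (hd : ∀ j, MvPolynomial.eval x (MvPolynomial.pderiv j
      ((∑ i, C (c i) * X i ^ m + C a) ^ k - C b * ∏ i, X i)) = 0) :
    (∀ j, MvPolynomial.eval x (∑ i, C (c i) * X i ^ m + C a)
        = (k : K) * (m : K) * c j * x j ^ m) ∧
    (∀ j, c ⟨0, by omega⟩ * x ⟨0, by omega⟩ ^ m = c j * x j ^ m) ∧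
    c ⟨0, by omega⟩ * ((n : K) - (k : K) * (m : K)) * x ⟨0, by omega⟩ ^ m + a = 0 := by
  have hkm : (k : K) * (m : K) ≠ 0 := by
    rw [mul_comm, ← Nat.cast_mul, Ne, CharP.cast_eq_zero_iff K p]
    exact hp
  have hk : k ≠ 0 := by rintro rfl; simp at hkm
  set g := ∑ i, C (c i) * X i ^ m + C a with hg
  have hg_ne : eval x g ≠ 0 := eval_ne_zero_of_eval_pow_sub_C_mul_prod_X_eq_zero hk hb hx hf
  have hg_eq : ∀ j, eval x g = k * m * c j * x j ^ m := by
    intro j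
    have h := congrArg (eval x) (sub_X_mul_pderiv_pow_sub_C_mul_prod_X g b hk j)
    rw [map_sub, map_mul, hf, hd j, X_mul_pderiv_sum_C_mul_X_pow_add_C] at h
    simp only [map_mul, map_sub, map_pow, map_natCast, eval_C, eval_X, mul_zero, sub_zero] at h
    have hfactor := (mul_eq_zero.1 h.symm).resolve_left (pow_ne_zero _ hg_ne)
    linear_combination hfactor
  set i₀ : Fin n := ⟨0, by omega⟩
  have hterm : ∀ j, c i₀ * x i₀ ^ m = c j * x j ^ m := fun j =>
    mul_left_cancel₀ hkm (by linear_combination hg_eq j - hg_eq i₀)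
  refine ⟨hg_eq, hterm, ?_⟩
  have hsum : eval x g = n * (c i₀ * x i₀ ^ m) + a := by
    simp [hg, ← hterm]
  linear_combination hg_eq i₀ - hsum
end
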